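/- Let H be a Hopf quasigroup over a field k, A a unital magma, and φ: H ⊗ A → A a linear map with φ(1_H ⊗ a) = a and φ(x ⊗ 1_A) = ε(x) 1_A. Then the smash product A # H, with underlying space A ⊗ H, unit 1_A ⊗ 1_H, and product (a # x)(b # y) = a·φ(x_(1) ⊗ b) # x_(2) y, is a right H-comodule magma with coaction ρ = id_A ⊗ δ_H. -/
import Mathlib


open TensorProduct

noncomputable section

namespace DoiHopf

variable (k : Type) [Field k]
variable (H : Type) [AddCommGroup H] [Module k H]

/-- A Hopf quasigroup structure on `H`: a unital (not necessarily associative) magma and a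
coassociative counital comonoid such that `eps` and `delta` are morphisms of unital magmas,
with an antipode `lam` satisfying the four Hopf quasigroup antipode identities. -/
structure IsHopfQuasigroup (mul : H ⊗[k] H →ₗ[k] H) (one : H)
    (eps : H →ₗ[k] k) (delta : H →ₗ[k] H ⊗[k] H) (lam : H →ₗ[k] H) : Prop where
  one_mul : ∀ x, mul (one ⊗ₜ[k] x) = x
  mul_one : ∀ x, mul (x ⊗ₜ[k] one) = x
  coassoc : (TensorProduct.assoc k H H H).toLinearMap ∘ₗ delta.rTensor H ∘ₗ delta
      = delta.lTensor H ∘ₗ delta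
  counit_left : ∀ x, (TensorProduct.lid k H) ((eps.rTensor H) (delta x)) = x
  counit_right : ∀ x, (TensorProduct.rid k H) ((eps.lTensor H) (delta x)) = x
  eps_mul : ∀ x y, eps (mul (x ⊗ₜ[k] y)) = eps x * eps y
  eps_one : eps one = 1
  delta_mul : delta ∘ₗ mul = (TensorProduct.map mul mul)
      ∘ₗ (TensorProduct.tensorTensorTensorComm k H H H H).toLinearMap
      ∘ₗ (TensorProduct.map delta delta)
  delta_one : delta one = one ⊗ₜ[k] one
  antipode_left₁ : mul ∘ₗ (TensorProduct.map lam mul)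
      ∘ₗ (TensorProduct.assoc k H H H).toLinearMap ∘ₗ delta.rTensor H
      = (TensorProduct.lid k H).toLinearMap ∘ₗ eps.rTensor H
  antipode_left₂ : mul ∘ₗ (TensorProduct.map (LinearMap.id : H →ₗ[k] H) (mul ∘ₗ lam.rTensor H))
      ∘ₗ (TensorProduct.assoc k H H H).toLinearMap ∘ₗ delta.rTensor H
      = (TensorProduct.lid k H).toLinearMap ∘ₗ eps.rTensor H
  antipode_right₁ : mul ∘ₗ (TensorProduct.map mul lam)
      ∘ₗ (TensorProduct.assoc k H H H).symm.toLinearMap ∘ₗ delta.lTensor H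
      = (TensorProduct.rid k H).toLinearMap ∘ₗ eps.lTensor H
  antipode_right₂ : mul ∘ₗ (TensorProduct.map (mul ∘ₗ lam.lTensor H) (LinearMap.id : H →ₗ[k] H))
      ∘ₗ (TensorProduct.assoc k H H H).symm.toLinearMap ∘ₗ delta.lTensor H
      = (TensorProduct.rid k H).toLinearMap ∘ₗ eps.lTensor H

/-- A right `H`-comodule magma structure on `B`: a unital magma which is a right `H`-comodule
whose coaction is multiplicative for the tensor product magma structure on `B ⊗ H` and
sends the unit to `1_B ⊗ 1_H`. -/
structure IsComoduleMagma (mul : H ⊗[k] H →ₗ[k] H) (one : H)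
    (eps : H →ₗ[k] k) (delta : H →ₗ[k] H ⊗[k] H)
    {B : Type} [AddCommGroup B] [Module k B]
    (mulB : B ⊗[k] B →ₗ[k] B) (oneB : B) (rho : B →ₗ[k] B ⊗[k] H) : Prop where
  oneB_mul : ∀ b, mulB (oneB ⊗ₜ[k] b) = b
  mul_oneB : ∀ b, mulB (b ⊗ₜ[k] oneB) = b
  counit : ∀ b, (TensorProduct.rid k B) ((eps.lTensor B) (rho b)) = b
  coassoc : rho.rTensor H ∘ₗ rho
      = (TensorProduct.assoc k B H H).symm.toLinearMap ∘ₗ delta.lTensor B ∘ₗ rho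
  mul_compat : rho ∘ₗ mulB = (TensorProduct.map mulB mul)
      ∘ₗ (TensorProduct.tensorTensorTensorComm k B H B H).toLinearMap
      ∘ₗ (TensorProduct.map rho rho)
  one_compat : rho oneB = oneB ⊗ₜ[k] one

/-- The generic "action against `f : H → B'` after the coaction" endomorphism; for
`f = h ∘ λ` this is the canonical idempotent `q` of the paper. -/
def act {M B' : Type} [AddCommGroup M] [Module k M] [AddCommGroup B'] [Module k B']
    (phi : M ⊗[k] B' →ₗ[k] M) (rho : M →ₗ[k] M ⊗[k] H) (f : H →ₗ[k] B') : M →ₗ[k] M :=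
  phi ∘ₗ f.lTensor M ∘ₗ rho

variable (mul : H ⊗[k] H →ₗ[k] H) (one : H) (eps : H →ₗ[k] k)
variable (delta : H →ₗ[k] H ⊗[k] H) (lam : H →ₗ[k] H)
variable (A : Type) [AddCommGroup A] [Module k A]
variable (mulA : A ⊗[k] A →ₗ[k] A) (oneA : A) (phi : H ⊗[k] A →ₗ[k] A)

/-- The map `ψ : H ⊗ A → A ⊗ H`, `x ⊗ a ↦ φ(x₍₁₎ ⊗ a) ⊗ x₍₂₎`. -/
def psi : H ⊗[k] A →ₗ[k] A ⊗[k] H :=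
  (TensorProduct.map phi (LinearMap.id : H →ₗ[k] H))
    ∘ₗ (TensorProduct.assoc k H A H).symm.toLinearMap
    ∘ₗ ((TensorProduct.comm k H A).toLinearMap.lTensor H)
    ∘ₗ (TensorProduct.assoc k H H A).toLinearMap
    ∘ₗ delta.rTensor A

/-- The smash product multiplication on `A ⊗ H`:
`(a ⊗ x)(b ⊗ y) = a·φ(x₍₁₎ ⊗ b) ⊗ x₍₂₎ y`. -/
def smashMul : (A ⊗[k] H) ⊗[k] (A ⊗[k] H) →ₗ[k] A ⊗[k] H :=
  (TensorProduct.map mulA mul)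
    ∘ₗ (TensorProduct.assoc k A A (H ⊗[k] H)).symm.toLinearMap
    ∘ₗ ((TensorProduct.assoc k A H H).toLinearMap.lTensor A)
    ∘ₗ (((psi k H delta A phi).rTensor H
          ∘ₗ (TensorProduct.assoc k H A H).symm.toLinearMap).lTensor A)
    ∘ₗ (TensorProduct.assoc k A H (A ⊗[k] H)).toLinearMap

/-- The coaction `id_A ⊗ δ` on the smash product `A # H`. -/
def smashRho : A ⊗[k] H →ₗ[k] (A ⊗[k] H) ⊗[k] H :=
  (TensorProduct.assoc k A H H).symm.toLinearMap ∘ₗ delta.lTensor A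

theorem assoc_symm_mk (a : A) (u : H ⊗[k] H) :
    (TensorProduct.assoc k A H H).symm (a ⊗ₜ[k] u)
      = ((TensorProduct.mk k A H a).rTensor H) u := by
  induction u using TensorProduct.induction_on with
  | zero => simp
  | tmul p q => simp
  | add u v hu hv => simp [tmul_add, hu, hv]

theorem psi_tmul (x : H) (a : A) :
    psi k H delta A phi (x ⊗ₜ[k] a)
      = TensorProduct.map (phi ∘ₗ (TensorProduct.mk k H A).flip a)
          (LinearMap.id : H →ₗ[k] H) (delta x) := by
  simp only [psi, LinearMap.comp_apply, LinearMap.rTensor_tmul, LinearEquiv.coe_coe]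
  generalize delta x = u
  induction u using TensorProduct.induction_on with
  | zero => simp
  | tmul p q => simp
  | add u v hu hv => simp only [add_tmul, map_add, hu, hv]

theorem smashRho_tmul (a : A) (x : H) :
    smashRho k H delta A (a ⊗ₜ[k] x) = ((TensorProduct.mk k A H a).rTensor H) (delta x) := by
  simp only [smashRho, LinearMap.comp_apply, LinearMap.lTensor_tmul, LinearEquiv.coe_coe]
  exact assoc_symm_mk k H A a (delta x)

theorem smashMul_tmul (a : A) (x : H) (b : A) (y : H) :
    smashMul k H mul delta A mulA phi ((a ⊗ₜ[k] x) ⊗ₜ[k] (b ⊗ₜ[k] y))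
      = TensorProduct.map
          (mulA ∘ₗ TensorProduct.mk k A A a ∘ₗ phi ∘ₗ (TensorProduct.mk k H A).flip b)
          (mul ∘ₗ (TensorProduct.mk k H H).flip y) (delta x) := by
  simp only [smashMul, LinearMap.comp_apply, LinearEquiv.coe_coe, assoc_tmul,
    LinearMap.lTensor_tmul, assoc_symm_tmul, LinearMap.rTensor_tmul, psi_tmul]
  generalize delta x = u
  induction u using TensorProduct.induction_on with
  | zero => simp
  | tmul p q => simp
  | add u v hu hv => simp only [map_add, add_tmul, tmul_add, hu, hv]

set_option maxHeartbeats 1000000 in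
/-- For a Hopf quasigroup `H`, a unital magma `A` and a linear map `φ : H ⊗ A → A` with
`φ(1 ⊗ a) = a` and `φ(x ⊗ 1_A) = ε(x) 1_A`, the smash product `A # H` with unit
`1_A ⊗ 1_H` and coaction `id_A ⊗ δ` is a right `H`-comodule magma. -/
theorem smash_comodule_magma
    (hH : IsHopfQuasigroup k H mul one eps delta lam)
    (hA1 : ∀ a, mulA (oneA ⊗ₜ[k] a) = a)
    (hA2 : ∀ a, mulA (a ⊗ₜ[k] oneA) = a)
    (hphi1 : ∀ a, phi (one ⊗ₜ[k] a) = a)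
    (hphi2 : ∀ x, phi (x ⊗ₜ[k] oneA) = eps x • oneA) :
    IsComoduleMagma k H mul one eps delta
      (smashMul k H mul delta A mulA phi) (oneA ⊗ₜ[k] one) (smashRho k H delta A) := by
  constructor
  · -- oneB_mul
    intro v
    induction v using TensorProduct.induction_on with
    | zero => simp
    | tmul b y =>
      rw [smashMul_tmul, hH.delta_one]
      simp [hphi1, hA1, hH.one_mul]
    | add u v hu hv => simp only [tmul_add, map_add, hu, hv]
  · -- mul_oneB
    intro v
    induction v using TensorProduct.induction_on with
    | zero => simp
    | tmul a x =>
      rw [smashMul_tmul]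
      have key : ∀ u : H ⊗[k] H,
          TensorProduct.map
            (mulA ∘ₗ TensorProduct.mk k A A a ∘ₗ phi ∘ₗ (TensorProduct.mk k H A).flip oneA)
            (mul ∘ₗ (TensorProduct.mk k H H).flip one) u
          = a ⊗ₜ[k] ((TensorProduct.lid k H) ((eps.rTensor H) u)) := by
        intro u
        induction u using TensorProduct.induction_on with
        | zero => simp
        | tmul p q =>
          simp [hphi2, hH.mul_one, tmul_smul, smul_tmul, hA2]
        | add u v hu hv => simp only [map_add, tmul_add, hu, hv]
      rw [key, hH.counit_left]
    | add u v hu hv => simp only [add_tmul, map_add, hu, hv]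
  · -- counit
    intro v
    induction v using TensorProduct.induction_on with
    | zero => simp
    | tmul a x =>
      rw [smashRho_tmul]
      have key : ∀ u : H ⊗[k] H,
          (TensorProduct.rid k (A ⊗[k] H))
              ((eps.lTensor (A ⊗[k] H)) (((TensorProduct.mk k A H a).rTensor H) u))
            = a ⊗ₜ[k] ((TensorProduct.rid k H) ((eps.lTensor H) u)) := by
        intro u
        induction u using TensorProduct.induction_on with
        | zero => simp
        | tmul p q => simp [tmul_smul, smul_tmul']
        | add u v hu hv => simp only [map_add, tmul_add, hu, hv]
      rw [key, hH.counit_right]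
    | add u v hu hv => simp only [map_add, hu, hv]
  · -- coassoc
    refine TensorProduct.ext' fun a x => ?_
    simp only [LinearMap.comp_apply, LinearEquiv.coe_coe, smashRho_tmul]
    have e1 : ∀ w : H ⊗[k] H,
        (smashRho k H delta A).rTensor H (((TensorProduct.mk k A H a).rTensor H) w)
          = (((TensorProduct.mk k A H a).rTensor H).rTensor H) ((delta.rTensor H) w) := by
      intro w
      induction w using TensorProduct.induction_on with
      | zero => simp
      | tmul p r => simp [smashRho_tmul]
      | add u v hu hv => simp only [map_add, hu, hv]
    have e2 : ∀ w : H ⊗[k] H,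
        (TensorProduct.assoc k (A ⊗[k] H) H H).symm
            ((delta.lTensor (A ⊗[k] H)) (((TensorProduct.mk k A H a).rTensor H) w))
          = (((TensorProduct.mk k A H a).rTensor H).rTensor H)
              ((TensorProduct.assoc k H H H).symm ((delta.lTensor H) w)) := by
      intro w
      induction w using TensorProduct.induction_on with
      | zero => simp
      | tmul p r =>
        simp only [LinearMap.rTensor_tmul, LinearMap.lTensor_tmul, TensorProduct.mk_apply]
        induction delta r using TensorProduct.induction_on with
        | zero => simp
        | tmul s t => simp
        | add u v hu hv => simp only [tmul_add, map_add, hu, hv]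
      | add u v hu hv => simp only [map_add, hu, hv]
    rw [e1, e2]
    have hco : (TensorProduct.assoc k H H H) ((delta.rTensor H) (delta x))
        = (delta.lTensor H) (delta x) := LinearMap.congr_fun hH.coassoc x
    rw [← hco, LinearEquiv.symm_apply_apply]
  · -- mul_compat
    refine TensorProduct.ext' fun u v => ?_
    induction u using TensorProduct.induction_on with
    | zero => simp
    | tmul a x =>
      induction v using TensorProduct.induction_on with
      | zero => simp
      | tmul b y =>
        simp only [LinearMap.comp_apply, LinearEquiv.coe_coe, TensorProduct.map_tmul,
          smashMul_tmul, smashRho_tmul]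
        -- claim R : the right hand side as a function of `δ x`
        have claimR : ∀ (w : H ⊗[k] H) (u : H ⊗[k] H),
            TensorProduct.map (smashMul k H mul delta A mulA phi) mul
              ((TensorProduct.tensorTensorTensorComm k (A ⊗[k] H) H (A ⊗[k] H) H)
                ((((TensorProduct.mk k A H a).rTensor H) u) ⊗ₜ[k]
                  (((TensorProduct.mk k A H b).rTensor H) w)))
            = ((TensorProduct.assoc k A H H).symm.toLinearMap ∘ₗ
                TensorProduct.map
                  (mulA ∘ₗ TensorProduct.mk k A A a ∘ₗ phi ∘ₗ (TensorProduct.mk k H A).flip b)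
                  (TensorProduct.map mul mul ∘ₗ
                    (TensorProduct.tensorTensorTensorComm k H H H H).toLinearMap ∘ₗ
                    (TensorProduct.mk k (H ⊗[k] H) (H ⊗[k] H)).flip w))
                ((TensorProduct.assoc k H H H) ((delta.rTensor H) u)) := by
          intro w u
          induction u using TensorProduct.induction_on with
          | zero => simp
          | tmul p r =>
            induction w using TensorProduct.induction_on with
            | zero => simp
            | tmul s t =>
              simp only [LinearMap.rTensor_tmul, TensorProduct.mk_apply,
                TensorProduct.tensorTensorTensorComm_tmul, TensorProduct.map_tmul,
                smashMul_tmul, LinearMap.comp_apply, LinearMap.flip_apply,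
                LinearEquiv.coe_coe, assoc_tmul]
              induction delta p using TensorProduct.induction_on with
              | zero => simp
              | tmul q₁ q₂ => simp
              | add u v hu hv => simp only [map_add, add_tmul, tmul_add, hu, hv]
            | add w₁ w₂ hw₁ hw₂ =>
              simp only [map_add, tmul_add, LinearMap.comp_add, LinearMap.add_comp,
                TensorProduct.map_add_right, LinearMap.add_apply, LinearMap.comp_apply,
                LinearEquiv.coe_coe] at hw₁ hw₂ ⊢
              rw [hw₁, hw₂]
          | add u₁ u₂ hu₁ hu₂ => simp only [map_add, add_tmul, tmul_add, hu₁, hu₂]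
        -- claim L : the left hand side as a function of `δ x`
        have claimL : ∀ u : H ⊗[k] H,
            smashRho k H delta A
              (TensorProduct.map
                (mulA ∘ₗ TensorProduct.mk k A A a ∘ₗ phi ∘ₗ (TensorProduct.mk k H A).flip b)
                (mul ∘ₗ (TensorProduct.mk k H H).flip y) u)
            = ((TensorProduct.assoc k A H H).symm.toLinearMap ∘ₗ
                TensorProduct.map
                  (mulA ∘ₗ TensorProduct.mk k A A a ∘ₗ phi ∘ₗ (TensorProduct.mk k H A).flip b)
                  (TensorProduct.map mul mul ∘ₗ
                    (TensorProduct.tensorTensorTensorComm k H H H H).toLinearMap ∘ₗ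
                    (TensorProduct.mk k (H ⊗[k] H) (H ⊗[k] H)).flip (delta y)))
                ((delta.lTensor H) u) := by
          intro u
          induction u using TensorProduct.induction_on with
          | zero => simp
          | tmul p h =>
            simp only [TensorProduct.map_tmul, LinearMap.comp_apply,
              LinearMap.flip_apply, TensorProduct.mk_apply, LinearMap.lTensor_tmul,
              LinearEquiv.coe_coe, smashRho_tmul]
            have hdm : delta (mul (h ⊗ₜ[k] y))
                = (TensorProduct.map mul mul)
                    ((TensorProduct.tensorTensorTensorComm k H H H H)
                      ((delta h) ⊗ₜ[k] (delta y))) := by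
              have := LinearMap.congr_fun hH.delta_mul (h ⊗ₜ[k] y)
              simpa using this
            rw [hdm, assoc_symm_mk]
          | add u v hu hv => simp only [map_add, hu, hv]
        have hco : (TensorProduct.assoc k H H H) ((delta.rTensor H) (delta x))
            = (delta.lTensor H) (delta x) := LinearMap.congr_fun hH.coassoc x
        rw [claimL (delta x), claimR (delta y) (delta x), ← hco]
      | add v₁ v₂ h₁ h₂ => simp only [tmul_add, map_add, h₁, h₂]
    | add u₁ u₂ h₁ h₂ => simp only [add_tmul, map_add, h₁, h₂]
  · -- one_compat
    rw [smashRho_tmul, hH.delta_one]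
    simp
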